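/- arXiv:2109.12673 — 9 statements merged into one kernel-verified Lean document; each statement's English description precedes it below -/
import Mathlib

section
/- Let a ≠ 0, T ≠ 0, and W(y) = D y² - aTy + a² with W strictly positive on [-u,u] for all u in an interval J containing 0. Then for every u ∈ J with u > 0, sign(∫_{-u}^{u} -y/W(y) dy) = -sign(aT), and for u ∈ J with u < 0, sign(∫_{-u}^{u} -y/W(y) dy) = sign(aT). -/
open Real Set intervalIntegral

lemma sign_g_aux (a T D u : ℝ) (ha : a ≠ 0) (hT : T ≠ 0) (hu : 0 < u)
    (W : ℝ → ℝ) (hW : ∀ y, W y = D * y ^ 2 - a * T * y + a ^ 2)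
    (hWpos : ∀ y ∈ Set.Icc (-u) u, 0 < W y) :
    Real.sign (∫ y in (-u)..u, -y / W y) = -Real.sign (a * T) := by
  have hWc : Continuous W := by
    have : W = fun y => D * y ^ 2 - a * T * y + a ^ 2 := funext hW
    rw [this]; continuity
  have hWne : ∀ y ∈ Set.Icc (-u) u, W y ≠ 0 := fun y hy => (hWpos y hy).ne'
  have hcont : ContinuousOn (fun y => -y / W y) (Set.Icc (-u) u) :=
    ContinuousOn.div (by fun_prop) hWc.continuousOn hWne
  have hsub1 : Set.uIcc (-u) (0:ℝ) ⊆ Set.Icc (-u) u := by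
    rw [Set.uIcc_of_le (by linarith)]
    exact Set.Icc_subset_Icc le_rfl hu.le
  have hsub2 : Set.uIcc (0:ℝ) u ⊆ Set.Icc (-u) u := by
    rw [Set.uIcc_of_le hu.le]
    exact Set.Icc_subset_Icc (by linarith) le_rfl
  have hi1 : IntervalIntegrable (fun y => -y / W y) MeasureTheory.volume (-u) 0 :=
    (hcont.mono hsub1).intervalIntegrable
  have hi2 : IntervalIntegrable (fun y => -y / W y) MeasureTheory.volume 0 u :=
    (hcont.mono hsub2).intervalIntegrable
  have hi3 : IntervalIntegrable (fun y => -(-y) / W (-y)) MeasureTheory.volume 0 u := by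
    have : ContinuousOn (fun y => -(-y) / W (-y)) (Set.uIcc 0 u) := by
      apply ContinuousOn.div (by fun_prop) (hWc.comp continuous_neg).continuousOn
      intro y hy
      apply hWne
      have := hsub2 hy
      simp only [Set.mem_Icc] at this ⊢
      constructor <;> linarith [this.1, this.2]
    exact this.intervalIntegrable
  have hsplit : (∫ y in (-u)..u, -y / W y)
      = ∫ y in (0:ℝ)..u, (-y / W y + -(-y) / W (-y)) := by
    rw [intervalIntegral.integral_add hi2 hi3]
    have h1 : (∫ y in (0:ℝ)..u, -(-y) / W (-y)) = ∫ y in (-u)..(0:ℝ), -y / W y := by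
      have := intervalIntegral.integral_comp_neg (a := (0:ℝ)) (b := u) (fun y => -y / W y)
      simpa using this
    rw [h1, add_comm]
    exact (intervalIntegral.integral_add_adjacent_intervals hi1 hi2).symm
  have key : ∀ y ∈ Set.Ioo (0:ℝ) u,
      -y / W y + -(-y) / W (-y) = -(2 * a * T) * (y ^ 2 / (W y * W (-y))) := by
    intro y hy
    have hy1 : y ∈ Set.Icc (-u) u := ⟨by linarith [hy.1], hy.2.le⟩
    have hy2 : -y ∈ Set.Icc (-u) u := ⟨by linarith [hy.2], by linarith [hy.1]⟩
    have h1 := (hWpos y hy1).ne'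
    have h2 := (hWpos (-y) hy2).ne'
    field_simp
    rw [hW y, hW (-y)]
    ring
  have hic : IntervalIntegrable (fun y => -y / W y + -(-y) / W (-y))
      MeasureTheory.volume 0 u := hi2.add hi3
  rcases lt_or_gt_of_ne (mul_ne_zero ha hT) with haT | haT
  · -- a*T < 0 : integral positive
    have hpos : 0 < ∫ y in (0:ℝ)..u, (-y / W y + -(-y) / W (-y)) := by
      apply intervalIntegral.intervalIntegral_pos_of_pos_on hic _ hu
      intro y hy
      rw [key y hy]
      have hy1 : y ∈ Set.Icc (-u) u := ⟨by linarith [hy.1], hy.2.le⟩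
      have hy2 : -y ∈ Set.Icc (-u) u := ⟨by linarith [hy.2], by linarith [hy.1]⟩
      have hA := hWpos y hy1
      have hB := hWpos (-y) hy2
      have hy0 : 0 < y ^ 2 := pow_pos hy.1 2
      have : 0 < y ^ 2 / (W y * W (-y)) := div_pos hy0 (mul_pos hA hB)
      nlinarith
    rw [hsplit, Real.sign_of_pos hpos, Real.sign_of_neg haT]
    norm_num
  · -- a*T > 0 : integral negative
    have hneg : 0 < ∫ y in (0:ℝ)..u, -(-y / W y + -(-y) / W (-y)) := by
      apply intervalIntegral.intervalIntegral_pos_of_pos_on hic.neg _ hu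
      intro y hy
      simp only [Pi.neg_apply]
      rw [key y hy]
      have hy1 : y ∈ Set.Icc (-u) u := ⟨by linarith [hy.1], hy.2.le⟩
      have hy2 : -y ∈ Set.Icc (-u) u := ⟨by linarith [hy.2], by linarith [hy.1]⟩
      have hA := hWpos y hy1
      have hB := hWpos (-y) hy2
      have hy0 : 0 < y ^ 2 := pow_pos hy.1 2
      have : 0 < y ^ 2 / (W y * W (-y)) := div_pos hy0 (mul_pos hA hB)
      nlinarith
    rw [intervalIntegral.integral_neg] at hneg
    have : (∫ y in (0:ℝ)..u, (-y / W y + -(-y) / W (-y))) < 0 := by linarith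
    rw [hsplit, Real.sign_of_neg this, Real.sign_of_pos haT]

theorem sign_g (a T D u : ℝ) (ha : a ≠ 0) (hT : T ≠ 0)
    (W : ℝ → ℝ) (hW : ∀ y, W y = D * y ^ 2 - a * T * y + a ^ 2)
    (hWpos : ∀ y ∈ Set.Icc (-|u|) |u|, 0 < W y) :
    (0 < u → Real.sign (∫ y in (-u)..u, -y / W y) = -Real.sign (a * T)) ∧
    (u < 0 → Real.sign (∫ y in (-u)..u, -y / W y) = Real.sign (a * T)) := by
  constructor
  · intro hu
    have habs : |u| = u := abs_of_pos hu
    rw [habs] at hWpos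
    exact sign_g_aux a T D u ha hT hu W hW hWpos
  · intro hu
    have habs : |u| = -u := abs_of_neg hu
    rw [habs] at hWpos
    have h := sign_g_aux a T D (-u) ha hT (by linarith) W hW (by simpa using hWpos)
    have hswap : (∫ y in (-u)..u, -y / W y) = -∫ y in (-(-u))..(-u), -y / W y := by
      rw [neg_neg, intervalIntegral.integral_symm]
    rw [hswap, Real.sign_neg, h, neg_neg]
end

section
/- Let a < 0, D > 0 and 4D - T² > 0, and W(y) = Dy² - aTy + a². Then lim_{u→+∞} ∫_{-u}^{u} (-y/W(y)) dy = πT/(D√(4D - T²)). More generally, for a ≠ 0 and 4D - T² > 0, the limit equals -πT·sign(a)/(D√(4D - T²)). -/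
/-!
For `q(y) = Ay² + By + C` with `A > 0` and `Δ = 4AC - B² > 0`, completing the square,
`4A q(y) = (2Ay + B)² + Δ`, gives the primitive `log q / (2A) - B / (A√Δ) · arctan ((2Ay + B)/√Δ)`
of `y / q(y)`. Over `[-u, u]` the logarithmic parts cancel in the limit, since `q(u)` and `q(-u)`
are both asymptotic to `Au²`, while the arctangent part increases by `π`. For `W` one has
`A = D`, `B = -aT`, `C = a²`, hence `√Δ = |a|√(4D - T²)` and `a / |a| = sign a`.
-/

open Real Filter intervalIntegral Topology

theorem Real.sign_mul_abs (r : ℝ) : sign r * |r| = r := by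
  rcases lt_trichotomy r 0 with hr | rfl | hr
  · rw [sign_of_neg hr, abs_of_neg hr]; ring
  · simp
  · rw [sign_of_pos hr, abs_of_pos hr]; ring

theorem tendsto_arctan_affine_sub_neg {c : ℝ} (hc : 0 < c) (d : ℝ) :
    Tendsto (fun u => arctan (c * u + d) - arctan (c * -u + d)) atTop (𝓝 π) := by
  have hTop : Tendsto (fun u => arctan (c * u + d)) atTop (𝓝 (π / 2)) :=
    (tendsto_arctan_atTop.mono_right nhdsWithin_le_nhds).comp
      (tendsto_atTop_add_const_right _ d (tendsto_id.const_mul_atTop hc))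
  have hBot : Tendsto (fun u => arctan (c * -u + d)) atTop (𝓝 (-(π / 2))) :=
    (tendsto_arctan_atBot.mono_right nhdsWithin_le_nhds).comp
      (tendsto_atBot_add_const_right _ d (tendsto_neg_atTop_atBot.const_mul_atBot hc))
  convert hTop.sub hBot using 2
  ring

section Quadratic

variable {A B C : ℝ}

theorem quadratic_pos (hA : 0 < A) (hΔ : 0 < 4 * A * C - B ^ 2) (y : ℝ) :
    0 < A * y ^ 2 + B * y + C := by
  nlinarith [sq_nonneg (2 * A * y + B)]

theorem tendsto_quadratic_div_sq (A B C : ℝ) :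
    Tendsto (fun u => (A * u ^ 2 + B * u + C) / u ^ 2) atTop (𝓝 A) := by
  have hinv : Tendsto (fun u : ℝ => A + B * u⁻¹ + C * u⁻¹ ^ 2) atTop (𝓝 (A + B * 0 + C * 0 ^ 2)) :=
    (tendsto_const_nhds.add (tendsto_inv_atTop_zero.const_mul B)).add
      ((tendsto_inv_atTop_zero.pow 2).const_mul C)
  simp only [mul_zero, add_zero, ne_eq, OfNat.ofNat_ne_zero, not_false_eq_true, zero_pow] at hinv
  refine hinv.congr' ?_
  filter_upwards [eventually_ne_atTop 0] with u hu
  field_simp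

theorem tendsto_log_quadratic_sub_log_quadratic_neg (hA : 0 < A) (hΔ : 0 < 4 * A * C - B ^ 2) :
    Tendsto (fun u => log (A * u ^ 2 + B * u + C) - log (A * (-u) ^ 2 + B * (-u) + C))
      atTop (𝓝 0) := by
  have hlog (B' : ℝ) : Tendsto (fun u => log ((A * u ^ 2 + B' * u + C) / u ^ 2)) atTop
      (𝓝 (log A)) :=
    ((continuousAt_log hA.ne').tendsto).comp (tendsto_quadratic_div_sq A B' C)
  rw [← sub_self (log A)]
  refine ((hlog B).sub (hlog (-B))).congr' ?_
  filter_upwards [eventually_ne_atTop 0] with u hu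
  have hneg : A * u ^ 2 + -B * u + C = A * (-u) ^ 2 + B * (-u) + C := by ring
  rw [hneg, log_div (quadratic_pos hA hΔ u).ne' (by positivity),
    log_div (quadratic_pos hA hΔ (-u)).ne' (by positivity)]
  ring

variable (A B C) in
noncomputable def quadraticPrimitive (y : ℝ) : ℝ :=
  log (A * y ^ 2 + B * y + C) / (2 * A)
    - B / (A * √(4 * A * C - B ^ 2)) * arctan ((2 * A * y + B) / √(4 * A * C - B ^ 2))

theorem hasDerivAt_quadraticPrimitive (hA : 0 < A) (hΔ : 0 < 4 * A * C - B ^ 2) (y : ℝ) :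
    HasDerivAt (quadraticPrimitive A B C) (y / (A * y ^ 2 + B * y + C)) y := by
  set s := √(4 * A * C - B ^ 2)
  have hs : 0 < s := sqrt_pos.mpr hΔ
  have hs2 : s ^ 2 = 4 * A * C - B ^ 2 := sq_sqrt hΔ.le
  have hq := (quadratic_pos hA hΔ y).ne'
  have hquad : HasDerivAt (fun y => A * y ^ 2 + B * y + C) (2 * A * y + B) y := by
    refine ((((hasDerivAt_pow 2 y).const_mul A).add
      ((hasDerivAt_id y).const_mul B)).add_const C).congr_deriv ?_
    ring
  have hlin : HasDerivAt (fun y => (2 * A * y + B) / s) (2 * A / s) y := by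
    refine ((((hasDerivAt_id y).const_mul (2 * A)).add_const B).div_const s).congr_deriv ?_
    ring
  have hF := ((hquad.log hq).div_const (2 * A)).sub
    ((hlin.arctan).const_mul (B / (A * s)))
  refine hF.congr_deriv ?_
  have hsq : 1 + ((2 * A * y + B) / s) ^ 2 = 4 * A * (A * y ^ 2 + B * y + C) / s ^ 2 := by
    field_simp
    linear_combination hs2
  rw [hsq]
  field_simp
  ring

theorem tendsto_quadraticPrimitive_sub_neg (hA : 0 < A) (hΔ : 0 < 4 * A * C - B ^ 2) :
    Tendsto (fun u => quadraticPrimitive A B C u - quadraticPrimitive A B C (-u)) atTop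
      (𝓝 (-(π * B) / (A * √(4 * A * C - B ^ 2)))) := by
  have hs : 0 < √(4 * A * C - B ^ 2) := sqrt_pos.mpr hΔ
  have harctan := tendsto_arctan_affine_sub_neg (div_pos (mul_pos two_pos hA) hs)
    (B / √(4 * A * C - B ^ 2))
  have hlim := ((tendsto_log_quadratic_sub_log_quadratic_neg hA hΔ).div_const (2 * A)).sub
    (harctan.const_mul (B / (A * √(4 * A * C - B ^ 2))))
  convert hlim using 1
  · ext u
    simp only [quadraticPrimitive]
    field_simp
    ring
  · rw [zero_div, zero_sub]
    congr 1
    ring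

theorem tendsto_integral_div_quadratic (hA : 0 < A) (hΔ : 0 < 4 * A * C - B ^ 2) :
    Tendsto (fun u => ∫ y in (-u)..u, y / (A * y ^ 2 + B * y + C)) atTop
      (𝓝 (-(π * B) / (A * √(4 * A * C - B ^ 2)))) := by
  have hcont : Continuous fun y => y / (A * y ^ 2 + B * y + C) :=
    continuous_id.div (by fun_prop) fun y => (quadratic_pos hA hΔ y).ne'
  refine (tendsto_quadraticPrimitive_sub_neg hA hΔ).congr fun u => ?_
  exact (integral_eq_sub_of_hasDerivAt (fun y _ => hasDerivAt_quadraticPrimitive hA hΔ y)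
    (hcont.intervalIntegrable _ _)).symm

end Quadratic

theorem limit_g_at_infinity (a T D : ℝ) (ha : a ≠ 0) (h : 4 * D - T ^ 2 > 0)
    (W : ℝ → ℝ) (hW : ∀ y, W y = D * y ^ 2 - a * T * y + a ^ 2) :
    Tendsto (fun u : ℝ => ∫ y in (-u)..u, -y / W y) atTop
      (nhds (-(π * T * Real.sign a) / (D * Real.sqrt (4 * D - T ^ 2)))) := by
  have hD : 0 < D := by nlinarith [sq_nonneg T]
  have hdisc : 4 * D * a ^ 2 - (-(a * T)) ^ 2 = a ^ 2 * (4 * D - T ^ 2) := by ring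
  have hΔ : 0 < 4 * D * a ^ 2 - (-(a * T)) ^ 2 := hdisc ▸ mul_pos (by positivity) h
  have hsqrt : √(4 * D * a ^ 2 - (-(a * T)) ^ 2) = |a| * √(4 * D - T ^ 2) := by
    rw [hdisc, sqrt_mul (sq_nonneg a), sqrt_sq_eq_abs]
  have hlim := (tendsto_integral_div_quadratic hD hΔ).neg
  convert hlim using 1
  · ext u
    rw [← intervalIntegral.integral_neg]
    congr 1 with y
    rw [hW, neg_div]
    ring
  · have habs : |a| ≠ 0 := abs_ne_zero.mpr ha
    have hE : √(4 * D - T ^ 2) ≠ 0 := (sqrt_pos.mpr h).ne'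
    rw [hsqrt]
    nth_rewrite 2 [← Real.sign_mul_abs a]
    field_simp
end

section
/- Let a, T, D be real with a ≠ 0, and let W(y) = Dy² - aTy + a². Suppose P is a real analytic function defined near 0 with P(0) = 0, P'(0) = -1, P(y₀) < 0 for small y₀ > 0, satisfying the differential equation P'(y₀)·P(y₀)·W(y₀) = y₀·W(P(y₀)). Then the Taylor expansion of P at 0 begins P(y₀) = -y₀ - (2T/(3a))y₀² - (4T²/(9a²))y₀³ + O(y₀⁴). -/
/-!
Analyticity gives `P y = -y + b y² + c y³ + O(y⁴)` and `P' y = -1 + 2 b y + 3 c y² + O(y³)`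
with `b = P''(0)/2` and `c = P'''(0)/6`. Substituting both expansions into the vanishing quantity
`P' P W(y) - y W(P)` shows that `-a (3ab + 2T) y² + 2a (ab² - 2ac + 2bT) y³ = O(y⁴)`, so both
coefficients vanish; as `a ≠ 0` this gives `b = -2T/(3a)` and `c = -4T²/(9a²)`.
-/

open Real Set Filter Asymptotics Topology

section Taylor

variable {𝕜 E : Type*} [NontriviallyNormedField 𝕜] [CharZero 𝕜] [NormedAddCommGroup E]
  [NormedSpace 𝕜 E] [CompleteSpace E] {f : 𝕜 → E}

theorem AnalyticAt.isBigO_sub_sum_iteratedDeriv (hf : AnalyticAt 𝕜 f 0) (n : ℕ) :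
    (fun z => f z - ∑ i ∈ Finset.range n, (z ^ i / i.factorial) • iteratedDeriv i f 0)
      =O[𝓝 0] fun z => z ^ n := by
  obtain ⟨F, hF, hfF⟩ := hf.exists_eventuallyEq_sum_add_pow_mul n
  have hF1 : F =O[𝓝 0] fun _ => (1 : 𝕜) := hF.continuousAt.tendsto.isBigO_one 𝕜
  refine ((isBigO_refl (fun z : 𝕜 => z ^ n) _).smul hF1).congr' ?_ (by simp)
  filter_upwards [hfF] with z hz
  rw [hz, add_sub_cancel_left]

theorem AnalyticAt.isBigO_deriv_sub_sum_iteratedDeriv (hf : AnalyticAt 𝕜 f 0) (n : ℕ) :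
    (fun z => deriv f z
        - ∑ i ∈ Finset.range n, (z ^ i / i.factorial) • iteratedDeriv (i + 1) f 0)
      =O[𝓝 0] fun z => z ^ n := by
  simpa only [iteratedDeriv_succ'] using hf.deriv.isBigO_sub_sum_iteratedDeriv n

end Taylor

section Vanishing

variable {𝕜 : Type*} [NontriviallyNormedField 𝕜]

theorem eq_zero_of_isBigO_const_mul_pow {A : 𝕜} {m n : ℕ} (hmn : m < n)
    (h : (fun z : 𝕜 => A * z ^ m) =O[𝓝 0] fun z => z ^ n) : A = 0 := by
  by_contra hA
  have hlo : (fun z : 𝕜 => z ^ m) =o[𝓝[≠] 0] fun z => z ^ m :=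
    (isLittleO_const_mul_left_iff hA).mp
      ((h.trans_isLittleO (isLittleO_pow_pow hmn)).mono nhdsWithin_le_nhds)
  refine isLittleO_irrefl (Eventually.frequently ?_) hlo
  filter_upwards [self_mem_nhdsWithin] with z hz using pow_ne_zero m hz

theorem eq_zero_and_eq_zero_of_isBigO_add_pow {A B : 𝕜} {n : ℕ}
    (h : (fun z : 𝕜 => A * z ^ n + B * z ^ (n + 1)) =O[𝓝 0] fun z => z ^ (n + 2)) :
    A = 0 ∧ B = 0 := by
  have hA : A = 0 := by
    refine eq_zero_of_isBigO_const_mul_pow (m := n) (n := n + 1) (by omega) ?_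
    have hB : (fun z : 𝕜 => B * z ^ (n + 1)) =O[𝓝 0] fun z => z ^ (n + 1) :=
      (isBigO_refl _ _).const_mul_left B
    exact ((h.trans (isLittleO_pow_pow (by omega)).isBigO).sub hB).congr_left
      fun z => by ring
  subst hA
  exact ⟨rfl, eq_zero_of_isBigO_const_mul_pow (m := n + 1) (n := n + 2) (by omega)
    (by simpa using h)⟩

end Vanishing

theorem isBigO_halfMap_residual {a T D b c : ℝ} {W P P' : ℝ → ℝ}
    (hW : ∀ y, W y = D * y ^ 2 - a * T * y + a ^ 2)
    (hP : DifferentiableAt ℝ P 0) (hP0 : P 0 = 0)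
    (hR : (fun y => P y - (-y + b * y ^ 2 + c * y ^ 3)) =O[𝓝 0] fun y => y ^ 4)
    (hS : (fun y => P' y - (-1 + 2 * b * y + 3 * c * y ^ 2)) =O[𝓝 0] fun y => y ^ 3)
    (hODE : ∀ᶠ y in 𝓝 0, P' y * P y * W y = y * W (P y)) :
    (fun y => -a * (3 * a * b + 2 * T) * y ^ 2
        + 2 * a * (a * b ^ 2 - 2 * a * c + 2 * b * T) * y ^ 3) =O[𝓝 0]
      fun y => y ^ 4 := by
  have hW1 : W =O[𝓝 0] fun _ => (1 : ℝ) := by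
    have : Continuous W := by simp only [funext hW]; fun_prop
    exact this.continuousAt.tendsto.isBigO_one ℝ
  have hPy : P =O[𝓝 0] fun y => y := by simpa [hP0] using hP.isBigO_sub
  have hRfactor : (fun y => (-1 + 2 * b * y + 3 * c * y ^ 2) * W y
      - y * (D * (P y + (-y + b * y ^ 2 + c * y ^ 3)) - a * T)) =O[𝓝 0] fun _ => (1 : ℝ) := by
    have : ContinuousAt (fun y => (-1 + 2 * b * y + 3 * c * y ^ 2) * W y
        - y * (D * (P y + (-y + b * y ^ 2 + c * y ^ 3)) - a * T)) 0 := by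
      have := hP.continuousAt
      simp only [hW]
      fun_prop
    exact this.tendsto.isBigO_one ℝ
  have hg : (fun y => (5 * a ^ 2 * b * c - 2 * a * T * b ^ 2 + 5 * a * T * c - b * D)
      + (3 * a ^ 2 * c ^ 2 - 5 * a * T * b * c + (b ^ 2 - 2 * c) * D) * y
      + (-3 * a * T * c ^ 2 + 3 * b * c * D) * y ^ 2 + 2 * c ^ 2 * D * y ^ 3)
      =O[𝓝 0] fun _ => (1 : ℝ) :=
    (Continuous.tendsto (by fun_prop) 0).isBigO_one ℝ
  -- With `p` the cubic truncation of `P`, `P' P W(y) - y W(P)` equals the claimed cubic plus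
  -- `y⁴ g(y) + (P' - p') P W(y) + (P - p) (p' W(y) - y (D (P + p) - a T))`.
  have hsum := (((isBigO_refl (fun y : ℝ => y ^ 4) _).mul hg).add
    (((hS.mul (hPy.mul hW1)).congr_right fun y => by ring).add
      (hR.mul hRfactor))).neg_left
  refine hsum.congr' ?_ (.of_forall fun y => by ring)
  filter_upwards [hODE] with y hy
  simp only [hW] at hy ⊢
  linear_combination -hy

theorem halfMap_coeffs_eq {a T b c : ℝ} (ha : a ≠ 0) (h₂ : -a * (3 * a * b + 2 * T) = 0)
    (h₃ : 2 * a * (a * b ^ 2 - 2 * a * c + 2 * b * T) = 0) :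
    b = -(2 * T / (3 * a)) ∧ c = -(4 * T ^ 2 / (9 * a ^ 2)) := by
  have e₂ : 3 * a * b + 2 * T = 0 := by simpa [ha] using h₂
  have e₃ : a * b ^ 2 - 2 * a * c + 2 * b * T = 0 := by simpa [ha] using h₃
  constructor
  · field_simp
    linear_combination e₂
  · field_simp
    linear_combination -(9 * a / 2) * e₃ + (3 * a * b / 2 + 2 * T) * e₂

theorem taylor_halfmap_origin_general (a T D : ℝ) (ha : a ≠ 0)
    (W : ℝ → ℝ) (hW : ∀ y, W y = D * y ^ 2 - a * T * y + a ^ 2)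
    (P : ℝ → ℝ) (hPanal : AnalyticAt ℝ P 0) (hP0 : P 0 = 0)
    (hP'0 : deriv P 0 = -1)
    (hODE : ∀ᶠ y₀ in nhds 0, deriv P y₀ * P y₀ * W y₀ = y₀ * W (P y₀)) :
    (fun y₀ : ℝ =>
        P y₀ - (-y₀ - (2 * T / (3 * a)) * y₀ ^ 2 - (4 * T ^ 2 / (9 * a ^ 2)) * y₀ ^ 3))
      =O[nhds 0] fun y₀ : ℝ => y₀ ^ 4 := by
  set b := iteratedDeriv 2 P 0 / 2
  set c := iteratedDeriv 3 P 0 / 6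
  have hR : (fun y => P y - (-y + b * y ^ 2 + c * y ^ 3)) =O[𝓝 0] fun y => y ^ 4 := by
    refine (hPanal.isBigO_sub_sum_iteratedDeriv 4).congr_left fun y => ?_
    simp only [Finset.sum_range_succ, Finset.sum_range_zero, iteratedDeriv_zero,
      iteratedDeriv_one, hP0, hP'0, smul_eq_mul, Nat.factorial, b, c]
    push_cast
    ring
  have hS : (fun y => deriv P y - (-1 + 2 * b * y + 3 * c * y ^ 2)) =O[𝓝 0] fun y => y ^ 3 := by
    refine (hPanal.isBigO_deriv_sub_sum_iteratedDeriv 3).congr_left fun y => ?_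
    simp only [Finset.sum_range_succ, Finset.sum_range_zero, zero_add, iteratedDeriv_one, hP'0,
      smul_eq_mul, Nat.factorial, b, c]
    push_cast
    ring
  obtain ⟨h₂, h₃⟩ := eq_zero_and_eq_zero_of_isBigO_add_pow
    (isBigO_halfMap_residual hW hPanal.differentiableAt hP0 hR hS hODE)
  obtain ⟨hb, hc⟩ := halfMap_coeffs_eq ha h₂ h₃
  refine hR.congr_left fun y => ?_
  rw [hb, hc]
  ring

theorem taylor_halfmap_origin (a T D : ℝ) (ha : a ≠ 0)
    (W : ℝ → ℝ) (hW : ∀ y, W y = D * y ^ 2 - a * T * y + a ^ 2)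
    (P : ℝ → ℝ) (hPanal : AnalyticAt ℝ P 0) (hP0 : P 0 = 0)
    (hP'0 : deriv P 0 = -1)
    (hPneg : ∀ᶠ y₀ in nhdsWithin 0 (Set.Ioi 0), P y₀ < 0)
    (hODE : ∀ᶠ y₀ in nhds 0, deriv P y₀ * P y₀ * W y₀ = y₀ * W (P y₀)) :
    (fun y₀ : ℝ =>
        P y₀ - (-y₀ - (2 * T / (3 * a)) * y₀ ^ 2 - (4 * T ^ 2 / (9 * a ^ 2)) * y₀ ^ 3))
      =O[nhds 0] fun y₀ : ℝ => y₀ ^ 4 :=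
  taylor_halfmap_origin_general a T D ha W hW P hPanal hP0 hP'0 hODE
end

section
/- Let a, T, D be real with a ≠ 0, ŷ₁ < 0, and W(y) = Dy² - aTy + a². Suppose P is real analytic near 0 with P(0) = ŷ₁, satisfying P'(y₀)·P(y₀)·W(y₀) = y₀·W(P(y₀)) near 0. Then P'(0) = 0 and P''(0) = W(ŷ₁)/(a² ŷ₁), i.e. the Taylor expansion begins P(y₀) = ŷ₁ + (W(ŷ₁)/(2a²ŷ₁)) y₀² + (T W(ŷ₁)/(3a³ŷ₁)) y₀³ + O(y₀⁴). -/
/-!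
Differentiating the identity `P' · P · W = y · W(P)` once and twice and evaluating at `0`, where
`P 0 = ŷ₁ ≠ 0` and `W 0 = a² ≠ 0`, successively gives `P'(0) = 0`, `P''(0) = W(ŷ₁)/(a² ŷ₁)` and
`P'''(0) = 2 T W(ŷ₁)/(a³ ŷ₁)`. The `O(y⁴)` bound is then Taylor's formula for the analytic `P`.
-/

open Filter Asymptotics Topology
open scoped Nat

theorem AnalyticAt.isBigO_sub_taylor {𝕜 : Type*} [NontriviallyNormedField 𝕜] [CompleteSpace 𝕜]
    [CharZero 𝕜] {f : 𝕜 → 𝕜} {x : 𝕜} (hf : AnalyticAt 𝕜 f x) (n : ℕ) :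
    (fun y => f y - ∑ k ∈ Finset.range n, iteratedDeriv k f x / k ! * (y - x) ^ k)
      =O[𝓝 x] fun y => (y - x) ^ n := by
  have hsub : Tendsto (fun y => y - x) (𝓝 x) (𝓝 0) := tendsto_sub_nhds_zero_iff.2 tendsto_id
  have h := (hf.hasFPowerSeriesAt.isBigO_sub_partialSum_pow n).comp_tendsto hsub
  refine (h.congr' (.of_forall fun y => ?_) (.of_forall fun y => ?_)).of_norm_right
  · simp [FormalMultilinearSeries.partialSum, mul_comm]
  · simp

theorem Filter.EventuallyEq.eventuallyEq_of_hasDerivAt {𝕜 F : Type*} [NontriviallyNormedField 𝕜]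
    [NormedAddCommGroup F] [NormedSpace 𝕜 F] {f g f' g' : 𝕜 → F} {x : 𝕜}
    (h : f =ᶠ[𝓝 x] g) (hf : ∀ᶠ y in 𝓝 x, HasDerivAt f (f' y) y)
    (hg : ∀ᶠ y in 𝓝 x, HasDerivAt g (g' y) y) : f' =ᶠ[𝓝 x] g' := by
  filter_upwards [h.deriv, hf, hg] with y hfg hfy hgy
  rw [← hfy.deriv, ← hgy.deriv, hfg]

section HalfMapODE

variable {P W W' W'' : ℝ → ℝ}

theorem halfMap_ode_deriv {x : ℝ} (hW : ∀ y, HasDerivAt W (W' y) y)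
    (hP : ∀ᶠ y in 𝓝 x, DifferentiableAt ℝ P y ∧ DifferentiableAt ℝ (deriv P) y)
    (hODE : ∀ᶠ y in 𝓝 x, deriv P y * P y * W y = y * W (P y)) :
    ∀ᶠ y in 𝓝 x, (deriv (deriv P) y * P y + deriv P y * deriv P y) * W y
        + deriv P y * P y * W' y = W (P y) + y * (W' (P y) * deriv P y) := by
  refine EventuallyEq.eventuallyEq_of_hasDerivAt hODE ?_ ?_ <;>
    filter_upwards [hP] with y ⟨hP₀, hP₁⟩
  · exact (hP₁.hasDerivAt.mul hP₀.hasDerivAt).mul (hW y)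
  · exact ((hasDerivAt_id' y).mul ((hW (P y)).comp y hP₀.hasDerivAt)).congr_deriv
      (by rw [one_mul]; rfl)

theorem halfMap_ode_second_deriv_zero (hW : ∀ y, HasDerivAt W (W' y) y)
    (hW' : ∀ y, HasDerivAt W' (W'' y) y)
    (hP : ∀ᶠ y in 𝓝 0, DifferentiableAt ℝ P y ∧ DifferentiableAt ℝ (deriv P) y)
    (hP₂ : DifferentiableAt ℝ (deriv (deriv P)) 0) (hP'0 : deriv P 0 = 0)
    (hODE : ∀ᶠ y in 𝓝 0, deriv P y * P y * W y = y * W (P y)) :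
    deriv (deriv (deriv P)) 0 * P 0 * W 0 + 2 * deriv (deriv P) 0 * P 0 * W' 0 = 0 := by
  have hODE' := halfMap_ode_deriv hW hP hODE
  obtain ⟨hP₀, hP₁⟩ := hP.self_of_nhds
  have hL := (((hP₂.hasDerivAt.mul hP₀.hasDerivAt).add (hP₁.hasDerivAt.mul hP₁.hasDerivAt)).mul
    (hW 0)).add ((hP₁.hasDerivAt.mul hP₀.hasDerivAt).mul (hW' 0))
  have hR := ((hW (P 0)).comp 0 hP₀.hasDerivAt).add
    ((hasDerivAt_id' 0).mul (((hW' (P 0)).comp 0 hP₀.hasDerivAt).mul hP₁.hasDerivAt))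
  have := hL.unique (hR.congr_of_eventuallyEq hODE')
  simp only [Pi.add_apply, Pi.mul_apply, Function.comp_apply, hP'0] at this
  linear_combination this

end HalfMapODE

theorem taylor_halfmap_origin_nonzero (a T D yhat₁ : ℝ) (ha : a ≠ 0) (hyhat₁ : yhat₁ < 0)
    (W : ℝ → ℝ) (hW : ∀ y, W y = D * y ^ 2 - a * T * y + a ^ 2)
    (P : ℝ → ℝ) (hPanal : AnalyticAt ℝ P 0) (hP0 : P 0 = yhat₁)
    (hODE : ∀ᶠ y₀ in nhds 0, deriv P y₀ * P y₀ * W y₀ = y₀ * W (P y₀)) :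
    deriv P 0 = 0 ∧ deriv (deriv P) 0 = W yhat₁ / (a ^ 2 * yhat₁) ∧
    (fun y₀ : ℝ =>
        P y₀ - (yhat₁ + (W yhat₁ / (2 * a ^ 2 * yhat₁)) * y₀ ^ 2 +
          (T * W yhat₁ / (3 * a ^ 3 * yhat₁)) * y₀ ^ 3))
      =O[nhds 0] fun y₀ : ℝ => y₀ ^ 4 := by
  have hyhat₁' : yhat₁ ≠ 0 := hyhat₁.ne
  have hW0 : W 0 = a ^ 2 := by simp [hW]
  have hW' : ∀ y, HasDerivAt W (2 * D * y - a * T) y := fun y => by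
    have h := ((hasDerivAt_pow 2 y).const_mul D).sub ((hasDerivAt_id' y).const_mul (a * T))
      |>.add_const (a ^ 2)
    exact (funext hW ▸ h).congr_deriv (by push_cast; ring)
  have hW'' : ∀ y, HasDerivAt (fun y => 2 * D * y - a * T) (2 * D) y := fun y =>
    ((hasDerivAt_id' y).const_mul (2 * D)).sub_const (a * T) |>.congr_deriv (mul_one _)
  have hP : ∀ᶠ y in 𝓝 0, DifferentiableAt ℝ P y ∧ DifferentiableAt ℝ (deriv P) y :=
    hPanal.eventually_analyticAt.mono fun y hy => ⟨hy.differentiableAt, hy.deriv.differentiableAt⟩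
  have hP₁ : deriv P 0 = 0 := by
    have h := hODE.self_of_nhds
    rw [hP0, hW0, zero_mul] at h
    simpa [ha, hyhat₁'] using h
  have hP₂ : deriv (deriv P) 0 = W yhat₁ / (a ^ 2 * yhat₁) := by
    have h := (halfMap_ode_deriv hW' hP hODE).self_of_nhds
    rw [hP₁, hP0, hW0] at h
    field_simp
    linear_combination h
  have hP₃ : deriv (deriv (deriv P)) 0 = 2 * T * W yhat₁ / (a ^ 3 * yhat₁) := by
    have h := halfMap_ode_second_deriv_zero hW' hW'' hP hPanal.deriv.deriv.differentiableAt hP₁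
      hODE
    rw [hP0, hW0, hP₂] at h
    field_simp at h
    rw [eq_div_iff (by positivity)]
    apply mul_left_cancel₀ ha
    linear_combination h
  refine ⟨hP₁, hP₂, (hPanal.isBigO_sub_taylor 4).congr' ?_ (by simp)⟩
  filter_upwards with y
  simp only [Finset.sum_range_succ, Finset.sum_range_zero, iteratedDeriv_succ, iteratedDeriv_zero,
    hP0, hP₁, hP₂, hP₃, sub_zero, Nat.factorial]
  field_simp
  ring
end

section
/- Let a, T, D be real with a ≠ 0, and W(y) = Dy² - aTy + a² > 0 on an interval containing [y₁, y₀] with y₁ < 0 < y₀ and y₁ solving the Poincaré half-map characterization ∫_{y₁}^{y₀} -y/W(y) dy = cT, where c = 0 if a > 0 and c = 2π/(D√(4D-T²)) if a < 0 (assuming 4D - T² > 0 in that case). If T > 0 then y₀ + y₁ < 0, if T < 0 then y₀ + y₁ > 0, and if T = 0 then y₁ = -y₀. -/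
open Real Set intervalIntegral
open MeasureTheory (volume)

/-!
Let `g(u) = ∫_{-u}^{u} -y/W(y) dy` and `m = min y₀ (-y₁)`. Since `-y/W(y)` has the sign of `-y`,
the difference `∫_{y₁}^{y₀} -y/W(y) dy - g(m)`, an integral over `[y₁, -m]` or over `[m, y₀]`,
has the sign of `-(y₀ + y₁)`; by the characterization it equals `cT - g(m)`. On the other hand
`cT - g(u)` has the sign of `T`. For `a > 0` we have `c = 0`, and folding the integral onto
`[0, u]` gives the integrand `y/W(-y) - y/W(y)`, whose sign is that of `W(y) - W(-y) = -2aTy`.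
For `a < 0` and `T > 0` an explicit primitive (a logarithm plus an arctangent) shows that `g(u)`
is at most the arctangent jump, which is less than `cT/2`. Replacing `(T, y)` by `(-T, -y)`
changes the sign of `g`, which gives the case `T < 0` and `g = 0` when `T = 0`.
-/

lemma integral_neg_to_self_eq_integral_add_comp_neg {f : ℝ → ℝ} {u : ℝ}
    (h₁ : IntervalIntegrable f volume (-u) 0) (h₂ : IntervalIntegrable f volume 0 u) :
    ∫ x in -u..u, f x = ∫ x in 0..u, (f x + f (-x)) := by
  have h₁' : IntervalIntegrable (fun x => f (-x)) volume 0 u := by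
    simpa using ((IntervalIntegrable.iff_comp_neg).mp h₁).symm
  rw [← integral_add_adjacent_intervals h₁ h₂, integral_add h₂ h₁', integral_comp_neg, neg_zero,
    add_comm]

lemma sign_integral_sub_integral_neg_min_to_min {f : ℝ → ℝ} {y₀ y₁ : ℝ}
    (h₁ : y₁ < 0) (h₀ : 0 < y₀) (hf : IntervalIntegrable f volume y₁ y₀)
    (hf_pos : ∀ y ∈ Ico y₁ 0, 0 < f y) (hf_neg : ∀ y ∈ Ioc 0 y₀, f y < 0) :
    SignType.sign ((∫ y in y₁..y₀, f y) - ∫ y in -min y₀ (-y₁)..min y₀ (-y₁), f y)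
      = SignType.sign (-(y₀ + y₁)) := by
  have hsub : ∀ p ∈ Icc y₁ y₀, ∀ q ∈ Icc y₁ y₀, IntervalIntegrable f volume p q :=
    fun p hp q hq => hf.mono_set <| by
      rw [uIcc_of_le (h₁.trans h₀).le]; exact uIcc_subset_Icc hp hq
  rcases lt_trichotomy y₀ (-y₁) with h | rfl | h
  · have hy : -y₀ ∈ Icc y₁ y₀ := ⟨by linarith, by linarith⟩
    have hdiff : 0 < ∫ y in y₁..-y₀, f y :=
      intervalIntegral_pos_of_pos_on (hsub _ ⟨le_rfl, by linarith⟩ _ hy)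
        (fun y hy => hf_pos y ⟨hy.1.le, by linarith [hy.2]⟩) (by linarith)
    rw [min_eq_left h.le, ← integral_add_adjacent_intervals (hsub _ ⟨le_rfl, by linarith⟩ _ hy)
      (hsub _ hy _ ⟨by linarith, le_rfl⟩), add_sub_cancel_right, sign_pos hdiff,
      sign_pos (by linarith)]
  · rw [min_self, neg_neg, sub_self, neg_add_cancel, neg_zero]
  · have hy : -y₁ ∈ Icc y₁ y₀ := ⟨by linarith, h.le⟩
    have hdiff : 0 < ∫ y in -y₁..y₀, -f y :=
      intervalIntegral_pos_of_pos_on (hsub _ hy _ ⟨by linarith, le_rfl⟩).neg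
        (fun y hy => neg_pos.mpr (hf_neg y ⟨by linarith [hy.1], hy.2.le⟩)) h
    rw [integral_neg, neg_pos] at hdiff
    rw [min_eq_right h.le, neg_neg,
      integral_interval_sub_left hf (hsub _ ⟨le_rfl, by linarith⟩ _ hy), sign_neg hdiff,
      sign_neg (by linarith)]

def halfMapW (a T D y : ℝ) : ℝ := D * y ^ 2 - a * T * y + a ^ 2

noncomputable def halfMapPrimitive (a T D y : ℝ) : ℝ :=
  -(1 / (2 * D)) * log (halfMapW a T D y)
    - a * T / (D * (|a| * √(4 * D - T ^ 2)))
      * arctan ((2 * D * y - a * T) / (|a| * √(4 * D - T ^ 2)))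

section
variable {a T D : ℝ}

lemma halfMapW_neg_trace (y : ℝ) : halfMapW a (-T) D y = halfMapW a T D (-y) := by
  unfold halfMapW; ring

lemma halfMapW_pos (ha : a ≠ 0) (hdisc : 0 < 4 * D - T ^ 2) (y : ℝ) : 0 < halfMapW a T D y := by
  unfold halfMapW
  nlinarith [sq_nonneg (2 * D * y - a * T), mul_pos (pow_pos (abs_pos.mpr ha) 2) hdisc, sq_abs a]

lemma continuousOn_div_halfMapW {s : Set ℝ} (hW : ∀ y ∈ s, 0 < halfMapW a T D y) :
    ContinuousOn (fun y => -y / halfMapW a T D y) s :=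
  ContinuousOn.div (by fun_prop) (by unfold halfMapW; fun_prop) fun y hy => (hW y hy).ne'

lemma hasDerivAt_halfMapPrimitive (ha : a ≠ 0) (hdisc : 0 < 4 * D - T ^ 2) (y : ℝ) :
    HasDerivAt (halfMapPrimitive a T D) (-y / halfMapW a T D y) y := by
  unfold halfMapPrimitive
  set s := |a| * √(4 * D - T ^ 2) with hs
  have hD : 0 < D := by nlinarith
  have hs_pos : 0 < s := mul_pos (abs_pos.mpr ha) (sqrt_pos.mpr hdisc)
  have hs_sq : s ^ 2 = a ^ 2 * (4 * D - T ^ 2) := by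
    rw [hs, mul_pow, sq_abs, sq_sqrt hdisc.le]
  have hW : HasDerivAt (halfMapW a T D) (2 * D * y - a * T) y := by
    have := (((hasDerivAt_pow 2 y).const_mul D).sub ((hasDerivAt_id y).const_mul (a * T))).add_const
      (a ^ 2)
    exact this.congr_deriv (by ring)
  have hlin : HasDerivAt (fun y => (2 * D * y - a * T) / s) (2 * D / s) y := by
    have := (((hasDerivAt_id y).const_mul (2 * D)).sub_const (a * T)).div_const s
    exact this.congr_deriv (by ring)
  refine (((hW.log (halfMapW_pos ha hdisc y).ne').const_mul _).sub
    (hlin.arctan.const_mul _)).congr_deriv ?_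
  have hsq : 1 + ((2 * D * y - a * T) / s) ^ 2 = 4 * D * halfMapW a T D y / s ^ 2 := by
    unfold halfMapW
    field_simp
    linear_combination hs_sq
  have hW_pos := halfMapW_pos ha hdisc y
  rw [hsq]
  unfold halfMapW at hW_pos ⊢
  field_simp
  ring

lemma halfMapPrimitive_sub_lt (ha : a < 0) (hT : 0 < T) (hdisc : 0 < 4 * D - T ^ 2) {u : ℝ}
    (hu : 0 ≤ u) :
    halfMapPrimitive a T D u - halfMapPrimitive a T D (-u)
      < 2 * π / (D * √(4 * D - T ^ 2)) * T := by
  set s := |a| * √(4 * D - T ^ 2) with hs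
  have hD : 0 < D := by nlinarith
  have hlog : log (halfMapW a T D (-u)) ≤ log (halfMapW a T D u) := by
    refine log_le_log (halfMapW_pos ha.ne hdisc _) ?_
    unfold halfMapW
    nlinarith [mul_nonneg (mul_nonneg (neg_nonneg.mpr ha.le) hT.le) hu]
  have harctan : arctan ((2 * D * u - a * T) / s) - arctan ((2 * D * (-u) - a * T) / s) < π := by
    linarith [arctan_lt_pi_div_two ((2 * D * u - a * T) / s),
      neg_pi_div_two_lt_arctan ((2 * D * (-u) - a * T) / s)]
  set k := T / (D * √(4 * D - T ^ 2)) with hk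
  have hk_pos : 0 < k := by positivity
  have hcoef : a * T / (D * s) = -k := by
    have := ha.ne
    rw [hs, hk, abs_of_neg ha]
    field_simp
  have hjump := mul_lt_mul_of_pos_left harctan hk_pos
  have hlog_part := mul_nonneg (by positivity : (0 : ℝ) ≤ 1 / (2 * D)) (sub_nonneg.mpr hlog)
  have hcT : 2 * π / (D * √(4 * D - T ^ 2)) * T = 2 * (k * π) := by rw [hk]; ring
  unfold halfMapPrimitive
  rw [← hs, hcoef, hcT]
  linarith [mul_pos hk_pos pi_pos]

lemma integral_neg_to_self_div_halfMapW_lt_of_neg (ha : a < 0) (hT : 0 < T)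
    (hdisc : 0 < 4 * D - T ^ 2) {u : ℝ} (hu : 0 ≤ u) :
    ∫ y in -u..u, -y / halfMapW a T D y < 2 * π / (D * √(4 * D - T ^ 2)) * T := by
  rw [integral_eq_sub_of_hasDerivAt (fun y _ => hasDerivAt_halfMapPrimitive ha.ne hdisc y)
    (continuousOn_div_halfMapW fun y _ => halfMapW_pos ha.ne hdisc y).intervalIntegrable]
  exact halfMapPrimitive_sub_lt ha hT hdisc hu

lemma integral_neg_to_self_div_halfMapW_neg_of_mul_pos (haT : 0 < a * T) {u : ℝ} (hu : 0 < u)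
    (hW : ∀ y ∈ Icc (-u) u, 0 < halfMapW a T D y) :
    ∫ y in -u..u, -y / halfMapW a T D y < 0 := by
  have hint : ∀ p ∈ Icc (-u) u, ∀ q ∈ Icc (-u) u,
      IntervalIntegrable (fun y => -y / halfMapW a T D y) volume p q :=
    fun p hp q hq =>
      ((continuousOn_div_halfMapW hW).mono (uIcc_subset_Icc hp hq)).intervalIntegrable
  have h0 : (0 : ℝ) ∈ Icc (-u) u := ⟨by linarith, hu.le⟩
  rw [integral_neg_to_self_eq_integral_add_comp_neg (hint _ ⟨le_rfl, by linarith⟩ _ h0)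
    (hint _ h0 _ ⟨by linarith, le_rfl⟩)]
  have hsum : ContinuousOn (fun x => -x / halfMapW a T D x + -(-x) / halfMapW a T D (-x))
      (Icc 0 u) :=
    (continuousOn_div_halfMapW fun y hy => hW y ⟨by linarith [hy.1], hy.2⟩).add
      ((continuousOn_div_halfMapW hW).comp continuousOn_neg
        fun y hy => ⟨by linarith [hy.2], by linarith [hy.1]⟩)
  have hneg : ∀ x ∈ Ioo 0 u, -x / halfMapW a T D x + -(-x) / halfMapW a T D (-x) < 0 := by
    intro x hx
    have hlt : halfMapW a T D x < halfMapW a T D (-x) := by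
      unfold halfMapW; nlinarith [mul_pos haT hx.1]
    have := div_lt_div_of_pos_left hx.1 (hW x ⟨by linarith [hx.1], hx.2.le⟩) hlt
    rw [neg_neg, neg_div]
    linarith
  rw [← neg_pos, ← integral_neg]
  exact intervalIntegral_pos_of_pos_on (hsum.neg.intervalIntegrable_of_Icc hu.le)
    (fun x hx => neg_pos.mpr (hneg x hx)) hu

lemma integral_neg_to_self_div_halfMapW_lt {c : ℝ} (ha : a ≠ 0) (hc_pos : 0 < a → c = 0)
    (hc_neg : a < 0 → 4 * D - T ^ 2 > 0 ∧ c = 2 * π / (D * √(4 * D - T ^ 2)))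
    (hT : 0 < T) {u : ℝ} (hu : 0 < u) (hW : ∀ y ∈ Icc (-u) u, 0 < halfMapW a T D y) :
    ∫ y in -u..u, -y / halfMapW a T D y < c * T := by
  rcases ha.lt_or_gt with ha | ha
  · obtain ⟨hdisc, rfl⟩ := hc_neg ha
    exact integral_neg_to_self_div_halfMapW_lt_of_neg ha hT hdisc hu.le
  · rw [hc_pos ha, zero_mul]
    exact integral_neg_to_self_div_halfMapW_neg_of_mul_pos (mul_pos ha hT) hu hW

lemma integral_neg_to_self_div_halfMapW_neg_trace (u : ℝ) :
    ∫ y in -u..u, -y / halfMapW a (-T) D y = -∫ y in -u..u, -y / halfMapW a T D y := by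
  rw [← integral_neg, ← neg_neg u, ← integral_comp_neg, neg_neg]
  simp only [halfMapW_neg_trace, neg_neg, neg_div]

lemma sign_sub_integral_neg_to_self_div_halfMapW {c : ℝ} (ha : a ≠ 0) (hc_pos : 0 < a → c = 0)
    (hc_neg : a < 0 → 4 * D - T ^ 2 > 0 ∧ c = 2 * π / (D * √(4 * D - T ^ 2)))
    {u : ℝ} (hu : 0 < u) (hW : ∀ y ∈ Icc (-u) u, 0 < halfMapW a T D y) :
    SignType.sign (c * T - ∫ y in -u..u, -y / halfMapW a T D y) = SignType.sign T := by
  rcases lt_trichotomy T 0 with hT | rfl | hT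
  · have hc_neg' :
        a < 0 → 4 * D - (-T) ^ 2 > 0 ∧ c = 2 * π / (D * √(4 * D - (-T) ^ 2)) := by
      simpa only [neg_sq] using hc_neg
    have hW' : ∀ y ∈ Icc (-u) u, 0 < halfMapW a (-T) D y := fun y hy => by
      rw [halfMapW_neg_trace]; exact hW (-y) ⟨by linarith [hy.2], by linarith [hy.1]⟩
    have hlt := integral_neg_to_self_div_halfMapW_lt ha hc_pos hc_neg' (neg_pos.mpr hT) hu hW'
    rw [integral_neg_to_self_div_halfMapW_neg_trace] at hlt
    rw [sign_neg hT, sign_neg (by linarith)]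
  · have hodd := integral_neg_to_self_div_halfMapW_neg_trace (a := a) (T := 0) (D := D) u
    rw [neg_zero] at hodd
    rw [show ∫ y in -u..u, -y / halfMapW a 0 D y = 0 by linarith, mul_zero, sub_zero]
  · have hlt := integral_neg_to_self_div_halfMapW_lt ha hc_pos hc_neg hT hu hW
    rw [sign_pos hT, sign_pos (sub_pos.mpr hlt)]
end

theorem relative_position (a T D c y₀ y₁ : ℝ) (ha : a ≠ 0)
    (W : ℝ → ℝ) (hW : ∀ y, W y = D * y ^ 2 - a * T * y + a ^ 2)
    (hWpos : ∀ y ∈ Set.Icc y₁ y₀, 0 < W y)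
    (h₁ : y₁ < 0) (h₀ : 0 < y₀)
    (hc_pos : 0 < a → c = 0)
    (hc_neg : a < 0 → 4 * D - T ^ 2 > 0 ∧ c = 2 * π / (D * Real.sqrt (4 * D - T ^ 2)))
    (hchar : (∫ y in y₁..y₀, -y / W y) = c * T) :
    (0 < T → y₀ + y₁ < 0) ∧ (T < 0 → 0 < y₀ + y₁) ∧ (T = 0 → y₁ = -y₀) := by
  obtain rfl : W = halfMapW a T D := funext hW
  set m := min y₀ (-y₁)
  have hm : 0 < m := lt_min h₀ (neg_pos.mpr h₁)
  have hWm : ∀ y ∈ Icc (-m) m, 0 < halfMapW a T D y := fun y hy =>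
    hWpos y ⟨by linarith [hy.1, min_le_right y₀ (-y₁)], hy.2.trans (min_le_left _ _)⟩
  have hsign : SignType.sign (-(y₀ + y₁)) = SignType.sign T := by
    rw [← sign_integral_sub_integral_neg_min_to_min h₁ h₀
      ((continuousOn_div_halfMapW hWpos).intervalIntegrable_of_Icc (h₁.trans h₀).le)
      (fun y hy => div_pos (neg_pos.mpr hy.2) (hWpos y ⟨hy.1, by linarith [hy.2]⟩))
      (fun y hy => div_neg_of_neg_of_pos (neg_neg_iff_pos.mpr hy.1)
        (hWpos y ⟨by linarith [hy.1], hy.2⟩)),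
      hchar, sign_sub_integral_neg_to_self_div_halfMapW ha hc_pos hc_neg hm hWm]
  refine ⟨fun hT => ?_, fun hT => ?_, fun hT => ?_⟩
  · rw [sign_pos hT, sign_eq_one_iff] at hsign; linarith
  · rw [sign_neg hT, sign_eq_neg_one_iff] at hsign; linarith
  · rw [hT, _root_.sign_zero, _root_.sign_eq_zero_iff] at hsign; linarith
end

section
/- Let W(y) = Dy² - aTy + a², and let P be twice differentiable on an open interval with P(y₀) < 0 < y₀, W(y₀) > 0, W(P(y₀)) > 0, satisfying P'(y₀) = y₀W(P(y₀))/(P(y₀)W(y₀)). Then P''(y₀) = -a²(y₀² - P(y₀)²)·W(P(y₀)) / (P(y₀)³·W(y₀)²). -/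
/-!
On the open interval `P' = y W(P) / (P W(y))` holds identically, so `P''` is the derivative of the
right-hand side. Differentiating it and substituting the equation for `P'` once more, everything
collapses because `W(y) - y W'(y) = a² - D y²` has no linear term; the surviving terms are
`a² (P² - y²)`.
-/

open Filter Topology

lemma hasDerivAt_quadratic (D b c x : ℝ) :
    HasDerivAt (fun y => D * y ^ 2 - b * y + c) (2 * D * x - b) x := by
  refine ((((hasDerivAt_id' x).fun_pow 2).const_mul D).fun_sub
    ((hasDerivAt_id' x).const_mul b)).add_const c |>.congr_deriv ?_
  norm_num
  ring

lemma hasDerivAt_mul_comp_div_mul {W P : ℝ → ℝ} {x P' W'x W'p : ℝ}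
    (hP : HasDerivAt P P' x) (hWx : HasDerivAt W W'x x) (hWp : HasDerivAt W W'p (P x))
    (hPx : P x ≠ 0) (hWx0 : W x ≠ 0) :
    HasDerivAt (fun y => y * W (P y) / (P y * W y))
      (((W (P x) + x * (W'p * P')) * (P x * W x) - x * W (P x) * (P' * W x + P x * W'x)) /
        (P x * W x) ^ 2) x := by
  simpa using ((hasDerivAt_id' x).mul (hWp.comp x hP)).fun_div (hP.mul hWx) (mul_ne_zero hPx hWx0)

lemma quadratic_sub_mul_deriv {a T D : ℝ} {W : ℝ → ℝ}
    (hW : ∀ y, W y = D * y ^ 2 - a * T * y + a ^ 2) (y : ℝ) :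
    W y - y * (2 * D * y - a * T) = a ^ 2 - D * y ^ 2 := by
  rw [hW]; ring

lemma deriv_ratio_along_solution {a T D : ℝ} {W : ℝ → ℝ}
    (hW : ∀ y, W y = D * y ^ 2 - a * T * y + a ^ 2) {x p : ℝ} (hp : p ≠ 0) (hWx : W x ≠ 0) :
    ((W p + x * ((2 * D * p - a * T) * (x * W p / (p * W x)))) * (p * W x) -
        x * W p * ((x * W p / (p * W x)) * W x + p * (2 * D * x - a * T))) / (p * W x) ^ 2 =
      -(a ^ 2 * (x ^ 2 - p ^ 2) * W p) / (p ^ 3 * W x ^ 2) := by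
  have hx := quadratic_sub_mul_deriv hW x
  have hp' := quadratic_sub_mul_deriv hW p
  field_simp
  linear_combination (W p * p ^ 2) * hx - (W p * x ^ 2) * hp'

theorem second_derivative_formula_general (a T D : ℝ)
    (W : ℝ → ℝ) (hW : ∀ y, W y = D * y ^ 2 - a * T * y + a ^ 2)
    (l r : ℝ) (P : ℝ → ℝ)
    (hdiff : ∀ y₀ ∈ Set.Ioo l r, DifferentiableAt ℝ P y₀)
    (hcond : ∀ y₀ ∈ Set.Ioo l r,
      P y₀ < 0 ∧ 0 < y₀ ∧ 0 < W y₀ ∧ 0 < W (P y₀) ∧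
      deriv P y₀ = y₀ * W (P y₀) / (P y₀ * W y₀)) :
    ∀ y₀ ∈ Set.Ioo l r,
      deriv (deriv P) y₀ =
        -(a ^ 2 * (y₀ ^ 2 - (P y₀) ^ 2) * W (P y₀)) / ((P y₀) ^ 3 * (W y₀) ^ 2) := by
  intro y₀ hy
  obtain ⟨hP0, -, hW0, -, hP'⟩ := hcond y₀ hy
  have hode : deriv P =ᶠ[𝓝 y₀] fun y => y * W (P y) / (P y * W y) :=
    eventually_of_mem (isOpen_Ioo.mem_nhds hy) fun y hy => (hcond y hy).2.2.2.2
  have hW' : ∀ x, HasDerivAt W (2 * D * x - a * T) x := fun x =>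
    funext hW ▸ hasDerivAt_quadratic D (a * T) (a ^ 2) x
  rw [hode.deriv_eq, (hasDerivAt_mul_comp_div_mul (hdiff y₀ hy).hasDerivAt (hW' y₀) (hW' (P y₀))
    hP0.ne hW0.ne').deriv, hP']
  exact deriv_ratio_along_solution hW hP0.ne hW0.ne'

theorem second_derivative_formula (a T D : ℝ)
    (W : ℝ → ℝ) (hW : ∀ y, W y = D * y ^ 2 - a * T * y + a ^ 2)
    (l r : ℝ) (P : ℝ → ℝ)
    (hdiff : ∀ y₀ ∈ Set.Ioo l r, DifferentiableAt ℝ P y₀)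
    (hdiff' : ∀ y₀ ∈ Set.Ioo l r, DifferentiableAt ℝ (deriv P) y₀)
    (hcond : ∀ y₀ ∈ Set.Ioo l r,
      P y₀ < 0 ∧ 0 < y₀ ∧ 0 < W y₀ ∧ 0 < W (P y₀) ∧
      deriv P y₀ = y₀ * W (P y₀) / (P y₀ * W y₀)) :
    ∀ y₀ ∈ Set.Ioo l r,
      deriv (deriv P) y₀ =
        -(a ^ 2 * (y₀ ^ 2 - (P y₀) ^ 2) * W (P y₀)) / ((P y₀) ^ 3 * (W y₀) ^ 2) :=
  second_derivative_formula_general a T D W hW l r P hdiff hcond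
end

section
/- Let a ≠ 0, W(y) = Dy² - aTy + a², and let P be twice differentiable on an open interval with P(y₀) < 0 < y₀, W(y₀) > 0, W(P(y₀)) > 0, P'(y₀) = y₀W(P(y₀))/(P(y₀)W(y₀)), and suppose sign(y₀ + P(y₀)) = -sign(T) with T ≠ 0. Then sign(P''(y₀)) = -sign(T). In particular, if T > 0 then P is strictly concave and if T < 0 then P is strictly convex on its domain interior. -/
/-! Along a solution of `P' = y W(P) / (P W(y))` with `W(y) = D y² - a T y + a²`, differentiating
the right-hand side and substituting `P'` back collapses the second derivative to
`P'' = -a² (y² - P²) W(P) / (P³ W(y)²)`.  When `P < 0 < y` and `W(P) > 0`, every factor except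
`y + P` has a fixed sign, so `P''` has the sign of `y + P`, which is `-sign T` by hypothesis;
the concavity statements then follow from the second-derivative test. -/

open Real Set

namespace Real

theorem sign_mul_of_pos {c : ℝ} (hc : 0 < c) (x : ℝ) : sign (c * x) = sign x := by
  rcases lt_trichotomy x 0 with hx | rfl | hx
  · rw [sign_of_neg hx, sign_of_neg (mul_neg_of_pos_of_neg hc hx)]
  · rw [mul_zero]
  · rw [sign_of_pos hx, sign_of_pos (mul_pos hc hx)]

theorem sign_eq_one_iff {x : ℝ} : sign x = 1 ↔ 0 < x := by
  rcases lt_trichotomy x 0 with hx | rfl | hx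
  · norm_num [sign_of_neg hx, hx.not_gt]
  · norm_num [sign_zero]
  · simp [sign_of_pos hx, hx]

theorem sign_eq_neg_one_iff {x : ℝ} : sign x = -1 ↔ x < 0 := by
  rw [← neg_inj, ← sign_neg, neg_neg, sign_eq_one_iff, neg_pos]

end Real

theorem sign_mul_sub_sq_div_eq_sign_add {a y p w w' : ℝ} (ha : a ≠ 0) (hp : p < 0)
    (hy : 0 < y) (hw : w ≠ 0) (hw' : 0 < w') :
    sign (a ^ 2 * (p ^ 2 - y ^ 2) * w' / (p ^ 3 * w ^ 2)) = sign (y + p) := by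
  have hcoeff : 0 < a ^ 2 * (y - p) * w' / (-p ^ 3 * w ^ 2) := by
    have : 0 < -p ^ 3 := neg_pos.mpr (Odd.pow_neg (by decide) hp)
    have : 0 < y - p := by linarith
    positivity
  rw [← Real.sign_mul_of_pos hcoeff (y + p)]
  congr 1
  field_simp
  ring

section SlopeField

variable {a T D : ℝ} {W : ℝ → ℝ}

theorem hasDerivAt_of_eq_quadratic (hW : ∀ y, W y = D * y ^ 2 - a * T * y + a ^ 2) (y : ℝ) :
    HasDerivAt W (2 * D * y - a * T) y := by
  have hW' : W = fun y => D * y ^ 2 - a * T * y + a ^ 2 := funext hW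
  subst hW'
  refine ((((hasDerivAt_pow 2 y).const_mul D).sub ((hasDerivAt_id y).const_mul (a * T))).add_const
    (a ^ 2)).congr_deriv ?_
  simp only [Nat.cast_ofNat, mul_one]
  ring

theorem hasDerivAt_slope_of_hasDerivAt (hW : ∀ y, W y = D * y ^ 2 - a * T * y + a ^ 2)
    {P : ℝ → ℝ} {y : ℝ} (hP : HasDerivAt P (y * W (P y) / (P y * W y)) y)
    (hPy : P y ≠ 0) (hWy : W y ≠ 0) :
    HasDerivAt (fun y => y * W (P y) / (P y * W y))
      (a ^ 2 * (P y ^ 2 - y ^ 2) * W (P y) / (P y ^ 3 * W y ^ 2)) y := by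
  have hWP := (hasDerivAt_of_eq_quadratic hW (P y)).comp y hP
  refine (((hasDerivAt_id' y).mul hWP).div (hP.mul (hasDerivAt_of_eq_quadratic hW y))
    (mul_ne_zero hPy hWy)).congr_deriv ?_
  simp only [Function.comp_apply, Pi.mul_apply]
  field_simp
  rw [hW (P y), hW y]
  ring

theorem deriv_deriv_eq_of_deriv_eq_slope (hW : ∀ y, W y = D * y ^ 2 - a * T * y + a ^ 2)
    {P : ℝ → ℝ} {U : Set ℝ} (hU : IsOpen U) (hP : ∀ y ∈ U, DifferentiableAt ℝ P y)
    (hODE : ∀ y ∈ U, deriv P y = y * W (P y) / (P y * W y))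
    {y : ℝ} (hy : y ∈ U) (hPy : P y ≠ 0) (hWy : W y ≠ 0) :
    deriv (deriv P) y = a ^ 2 * (P y ^ 2 - y ^ 2) * W (P y) / (P y ^ 3 * W y ^ 2) := by
  have hEq : deriv P =ᶠ[nhds y] fun y => y * W (P y) / (P y * W y) :=
    Filter.eventuallyEq_of_mem (hU.mem_nhds hy) hODE
  have hPy' : HasDerivAt P (y * W (P y) / (P y * W y)) y := hODE y hy ▸ (hP y hy).hasDerivAt
  rw [hEq.deriv_eq, (hasDerivAt_slope_of_hasDerivAt hW hPy' hPy hWy).deriv]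

end SlopeField

theorem second_derivative_sign_general (a T D : ℝ) (ha : a ≠ 0)
    (W : ℝ → ℝ) (hW : ∀ y, W y = D * y ^ 2 - a * T * y + a ^ 2)
    (l r : ℝ) (P : ℝ → ℝ)
    (hdiff : ∀ y₀ ∈ Set.Ioo l r, DifferentiableAt ℝ P y₀)
    (hcond : ∀ y₀ ∈ Set.Ioo l r,
      P y₀ < 0 ∧ 0 < y₀ ∧ 0 < W y₀ ∧ 0 < W (P y₀) ∧
      deriv P y₀ = y₀ * W (P y₀) / (P y₀ * W y₀))
    (hpos : ∀ y₀ ∈ Set.Ioo l r, Real.sign (y₀ + P y₀) = -Real.sign T) :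
    (∀ y₀ ∈ Set.Ioo l r, Real.sign (deriv (deriv P) y₀) = -Real.sign T) ∧
    (0 < T → StrictConcaveOn ℝ (Set.Ioo l r) P) ∧
    (T < 0 → StrictConvexOn ℝ (Set.Ioo l r) P) := by
  have hsign : ∀ y ∈ Ioo l r, sign (deriv (deriv P) y) = -sign T := by
    intro y hy
    obtain ⟨hPy, hy₀, hWy, hWPy, -⟩ := hcond y hy
    rw [deriv_deriv_eq_of_deriv_eq_slope hW isOpen_Ioo hdiff (fun y hy => (hcond y hy).2.2.2.2) hy
      hPy.ne hWy.ne', sign_mul_sub_sq_div_eq_sign_add ha hPy hy₀ hWy.ne' hWPy, hpos y hy]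
  have hcont : ContinuousOn P (Ioo l r) := fun y hy => (hdiff y hy).continuousAt.continuousWithinAt
  refine ⟨hsign, fun hT => ?_, fun hT => ?_⟩
  · refine strictConcaveOn_of_deriv2_neg' (convex_Ioo l r) hcont fun y hy => ?_
    exact sign_eq_neg_one_iff.mp ((hsign y hy).trans (by rw [sign_of_pos hT]))
  · refine strictConvexOn_of_deriv2_pos' (convex_Ioo l r) hcont fun y hy => ?_
    exact sign_eq_one_iff.mp ((hsign y hy).trans (by rw [sign_of_neg hT, neg_neg]))

theorem second_derivative_sign (a T D : ℝ) (ha : a ≠ 0) (hT : T ≠ 0)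
    (W : ℝ → ℝ) (hW : ∀ y, W y = D * y ^ 2 - a * T * y + a ^ 2)
    (l r : ℝ) (P : ℝ → ℝ)
    (hdiff : ∀ y₀ ∈ Set.Ioo l r, DifferentiableAt ℝ P y₀)
    (hdiff' : ∀ y₀ ∈ Set.Ioo l r, DifferentiableAt ℝ (deriv P) y₀)
    (hcond : ∀ y₀ ∈ Set.Ioo l r,
      P y₀ < 0 ∧ 0 < y₀ ∧ 0 < W y₀ ∧ 0 < W (P y₀) ∧
      deriv P y₀ = y₀ * W (P y₀) / (P y₀ * W y₀))
    (hpos : ∀ y₀ ∈ Set.Ioo l r, Real.sign (y₀ + P y₀) = -Real.sign T) :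
    (∀ y₀ ∈ Set.Ioo l r, Real.sign (deriv (deriv P) y₀) = -Real.sign T) ∧
    (0 < T → StrictConcaveOn ℝ (Set.Ioo l r) P) ∧
    (T < 0 → StrictConvexOn ℝ (Set.Ioo l r) P) :=
  second_derivative_sign_general a T D ha W hW l r P hdiff hcond hpos
end

section
/- Let f, g : J → ℝ be functions on an open interval J with f strictly concave and strictly decreasing and g strictly concave and strictly decreasing, such that f - g is strictly concave (or strictly convex). Then the equation f(y₀) = g(y₀) has at most two solutions in J. Consequently, if T_L·T_R > 0, the difference y_L - y_R of the two Poincaré half-maps of the piecewise linear system is strictly concave or strictly convex, and the system has at most two limit cycles. -/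
/-! A strictly convex or concave function takes each value at most twice: strictly between two
points where it equals `c` it stays strictly on one side of `c`. Applied to `f - g` and `c = 0`. -/

open Set

theorem Set.encard_le_two_of_forall_not_lt_lt {α : Type*} [LinearOrder α] {S : Set α}
    (h : ∀ x ∈ S, ∀ y ∈ S, ∀ z ∈ S, x < y → ¬ y < z) : S.encard ≤ 2 := by
  by_contra! hlt
  obtain ⟨t, htS, ht⟩ := exists_subset_encard_eq (Order.add_one_le_of_lt hlt)
  lift t to Finset α using finite_of_encard_eq_coe ht
  have hcard : t.card = 3 := by exact_mod_cast ht
  let e := t.orderEmbOfFin hcard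
  have he : ∀ i, e i ∈ S := fun i => htS (t.orderEmbOfFin_mem hcard i)
  exact h (e 0) (he 0) (e 1) (he 1) (e 2) (he 2) (e.strictMono (by decide))
    (e.strictMono (by decide))

section

variable {s : Set ℝ} {h : ℝ → ℝ} {c : ℝ}

theorem StrictConvexOn.encard_setOf_eq_le_two (hh : StrictConvexOn ℝ s h) :
    {x ∈ s | h x = c}.encard ≤ 2 := by
  refine encard_le_two_of_forall_not_lt_lt ?_
  rintro x ⟨hx, hxc⟩ y ⟨-, hyc⟩ z ⟨hz, hzc⟩ hxy hyz
  have := hh.lt_on_openSegment hx hz (hxy.trans hyz).ne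
    (by rw [openSegment_eq_Ioo (hxy.trans hyz)]; exact ⟨hxy, hyz⟩)
  simp [hxc, hyc, hzc] at this

theorem StrictConcaveOn.encard_setOf_eq_le_two (hh : StrictConcaveOn ℝ s h) :
    {x ∈ s | h x = c}.encard ≤ 2 := by
  simpa only [Pi.neg_apply, neg_inj] using hh.neg.encard_setOf_eq_le_two (c := -c)

end

theorem at_most_two_intersections_general (l r : ℝ) (f g : ℝ → ℝ)
    (hfg : StrictConcaveOn ℝ (Set.Ioo l r) (f - g) ∨
           StrictConvexOn ℝ (Set.Ioo l r) (f - g)) :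
    {y₀ ∈ Set.Ioo l r | f y₀ = g y₀}.encard ≤ 2 := by
  have hzeros : {y₀ ∈ Ioo l r | f y₀ = g y₀} = {y₀ ∈ Ioo l r | (f - g) y₀ = 0} := by
    simp only [Pi.sub_apply, sub_eq_zero]
  rw [hzeros]
  rcases hfg with hconc | hconv
  · exact hconc.encard_setOf_eq_le_two
  · exact hconv.encard_setOf_eq_le_two

theorem at_most_two_intersections (l r : ℝ) (f g : ℝ → ℝ)
    (hf : StrictConcaveOn ℝ (Set.Ioo l r) f) (hf' : StrictAntiOn f (Set.Ioo l r))
    (hg : StrictConcaveOn ℝ (Set.Ioo l r) g) (hg' : StrictAntiOn g (Set.Ioo l r))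
    (hfg : StrictConcaveOn ℝ (Set.Ioo l r) (f - g) ∨
           StrictConvexOn ℝ (Set.Ioo l r) (f - g)) :
    {y₀ ∈ Set.Ioo l r | f y₀ = g y₀}.encard ≤ 2 :=
  at_most_two_intersections_general l r f g hfg
end

section
/- Let T, D be real with 4D - T² > 0 and a real. Suppose P : [M, ∞) → ℝ satisfies the integral characterization of the left Poincaré half-map with W(y) = Dy² - aTy + a² > 0 on ℝ. Then lim_{y₀→+∞} P(y₀)/y₀ = -exp(πT/√(4D - T²)). -/
open Real Set Filter intervalIntegral
open scoped Topology

/-!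
For a quadratic `W y = D y² + B y + C` with negative discriminant, `-y / W y` has the explicit
antiderivative `G = -(1/2D) log W + (B / D s) arctan ((2 D y + B) / s)`, `s = √(4DC - B²)`.
Since `log W y = log D + log y² + o(1)` and the arctan term tends to `± π B / (2 D s)` as
`y → ±∞`, the characterization `G y₀ - G (P y₀) = c T` forces
`log (-P y₀ / y₀) → D c T - π B / s`, and with `B = -a T`, `s = |a| √(4D - T²)` this limit is
`π T / √(4D - T²)` for either sign of `a`.
-/

section QuadraticPotential

variable {D B C s : ℝ}

lemma quadratic_pos_s17 (hD : 0 < D) (hs : s ^ 2 = 4 * D * C - B ^ 2) (hs0 : s ≠ 0) (y : ℝ) :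
    0 < D * y ^ 2 + B * y + C := by
  have h4 : 4 * D * (D * y ^ 2 + B * y + C) = (2 * D * y + B) ^ 2 + s ^ 2 := by
    rw [hs]; ring
  have : 0 < 4 * D * (D * y ^ 2 + B * y + C) := by rw [h4]; positivity
  exact pos_of_mul_pos_right this (by positivity)

noncomputable def quadPotential (D B C s y : ℝ) : ℝ :=
  -(1 / (2 * D)) * log (D * y ^ 2 + B * y + C) + B / (D * s) * arctan ((2 * D * y + B) / s)

lemma hasDerivAt_quadPotential (hD : 0 < D) (hs : s ^ 2 = 4 * D * C - B ^ 2) (hs0 : s ≠ 0)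
    (y : ℝ) : HasDerivAt (quadPotential D B C s) (-y / (D * y ^ 2 + B * y + C)) y := by
  have hW := quadratic_pos_s17 hD hs hs0 y
  have hWd : HasDerivAt (fun z => D * z ^ 2 + B * z + C) (2 * D * y + B) y := by
    refine ((((hasDerivAt_pow 2 y).const_mul D).add
      ((hasDerivAt_id y).const_mul B)).add_const C).congr_deriv ?_
    push_cast; ring
  have hu : HasDerivAt (fun z => (2 * D * z + B) / s) (2 * D / s) y := by
    refine ((((hasDerivAt_id y).const_mul (2 * D)).add_const B).div_const s).congr_deriv ?_
    simp
  have harctan := (hasDerivAt_arctan _).comp y hu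
  refine (((hWd.log hW.ne').const_mul (-(1 / (2 * D)))).add
    (harctan.const_mul (B / (D * s)))).congr_deriv ?_
  have h1u : 1 + ((2 * D * y + B) / s) ^ 2 = 4 * D * (D * y ^ 2 + B * y + C) / s ^ 2 := by
    field_simp
    rw [hs]; ring
  rw [h1u]
  field_simp
  ring

lemma integral_neg_div_quadratic (hD : 0 < D) (hs : s ^ 2 = 4 * D * C - B ^ 2) (hs0 : s ≠ 0)
    (u v : ℝ) :
    ∫ y in u..v, -y / (D * y ^ 2 + B * y + C) = quadPotential D B C s v - quadPotential D B C s u :=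
  integral_eq_sub_of_hasDerivAt (fun y _ => hasDerivAt_quadPotential hD hs hs0 y)
    ((continuous_neg.div (by fun_prop) fun y =>
      (quadratic_pos_s17 hD hs hs0 y).ne').intervalIntegrable _ _)

lemma tendsto_log_quadratic_div_sq (hD : D ≠ 0) :
    Tendsto (fun y => log ((D * y ^ 2 + B * y + C) / y ^ 2)) (Bornology.cobounded ℝ)
      (𝓝 (log D)) := by
  have hcont : ContinuousAt (fun t : ℝ => log (D + B * t + C * t ^ 2)) 0 :=
    (continuousAt_log (by simpa using hD)).comp (by fun_prop)
  have hlim := hcont.tendsto.comp tendsto_inv₀_cobounded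
  simp only [Function.comp_def, ne_eq, OfNat.ofNat_ne_zero, not_false_eq_true, zero_pow,
    mul_zero, add_zero] at hlim
  refine hlim.congr' ?_
  filter_upwards [Bornology.eventually_ne_cobounded 0] with y hy
  congr 1
  field_simp

lemma two_mul_quadPotential_add_log_sq (hD : D ≠ 0) (hs0 : s ≠ 0) {y : ℝ} (hy : y ≠ 0)
    (hW : 0 < D * y ^ 2 + B * y + C) :
    2 * D * quadPotential D B C s y + log (y ^ 2)
      = -log ((D * y ^ 2 + B * y + C) / y ^ 2) + 2 * B / s * arctan ((2 * D * y + B) / s) := by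
  rw [quadPotential, log_div hW.ne' (pow_ne_zero 2 hy)]
  field_simp
  ring

lemma tendsto_quadPotential_atTop (hD : 0 < D) (hs : s ^ 2 = 4 * D * C - B ^ 2) (hs0 : 0 < s) :
    Tendsto (fun y => 2 * D * quadPotential D B C s y + log (y ^ 2)) atTop
      (𝓝 (-log D + π * B / s)) := by
  have harctan : Tendsto (fun y => arctan ((2 * D * y + B) / s)) atTop (𝓝 (π / 2)) :=
    (tendsto_arctan_atTop.mono_right nhdsWithin_le_nhds).comp
      ((tendsto_atTop_add_const_right _ B
        (tendsto_id.const_mul_atTop (by positivity))).atTop_div_const hs0)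
  have hlim := ((tendsto_log_quadratic_div_sq (B := B) (C := C) hD.ne').mono_left
    IsOrderBornology.atTop_le_cobounded).neg.add (harctan.const_mul (2 * B / s))
  convert hlim.congr' ?_ using 2
  · ring
  · filter_upwards [eventually_ne_atTop 0] with y hy
    exact (two_mul_quadPotential_add_log_sq hD.ne' hs0.ne' hy (quadratic_pos_s17 hD hs hs0.ne' y)).symm

lemma tendsto_quadPotential_atBot (hD : 0 < D) (hs : s ^ 2 = 4 * D * C - B ^ 2) (hs0 : 0 < s) :
    Tendsto (fun y => 2 * D * quadPotential D B C s y + log (y ^ 2)) atBot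
      (𝓝 (-log D - π * B / s)) := by
  have harctan : Tendsto (fun y => arctan ((2 * D * y + B) / s)) atBot (𝓝 (-(π / 2))) :=
    (tendsto_arctan_atBot.mono_right nhdsWithin_le_nhds).comp
      ((tendsto_atBot_add_const_right _ B
        (tendsto_id.const_mul_atBot (by positivity))).atBot_div_const hs0)
  have hlim := ((tendsto_log_quadratic_div_sq (B := B) (C := C) hD.ne').mono_left
    IsOrderBornology.atBot_le_cobounded).neg.add (harctan.const_mul (2 * B / s))
  convert hlim.congr' ?_ using 2
  · ring
  · filter_upwards [eventually_ne_atBot 0] with y hy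
    exact (two_mul_quadPotential_add_log_sq hD.ne' hs0.ne' hy (quadratic_pos_s17 hD hs hs0.ne' y)).symm

lemma tendsto_div_of_quadPotential_sub_eq (hD : 0 < D) (hs : s ^ 2 = 4 * D * C - B ^ 2)
    (hs0 : 0 < s) {P : ℝ → ℝ} (hPbot : Tendsto P atTop atBot) {κ : ℝ}
    (hκ : ∀ᶠ y in atTop, quadPotential D B C s y - quadPotential D B C s (P y) = κ) :
    Tendsto (fun y => P y / y) atTop (𝓝 (-exp (D * κ - π * B / s))) := by
  have hlog : Tendsto (fun y => log (-P y / y)) atTop (𝓝 (D * κ - π * B / s)) := by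
    have hlim := ((((tendsto_quadPotential_atBot hD hs hs0).comp hPbot).sub
      (tendsto_quadPotential_atTop hD hs hs0)).add_const (2 * D * κ)).div_const 2
    rw [show (-log D - π * B / s - (-log D + π * B / s) + 2 * D * κ) / 2
      = D * κ - π * B / s by ring] at hlim
    refine hlim.congr' ?_
    filter_upwards [hκ, eventually_gt_atTop 0, hPbot.eventually_lt_atBot 0] with y hy hy0 hPy
    rw [log_div (by linarith) hy0.ne', ← hy, Function.comp_apply,
      show P y ^ 2 = (-P y) ^ 2 by ring, log_pow, log_pow]
    push_cast
    ring
  have hexp := (continuous_exp.tendsto _).comp hlog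
  refine hexp.neg.congr' ?_
  filter_upwards [eventually_gt_atTop 0, hPbot.eventually_lt_atBot 0] with y hy0 hPy
  rw [Function.comp_apply, exp_log (div_pos (by linarith) hy0)]
  ring

end QuadraticPotential

theorem halfmap_slope_at_infinity_general (a T D M c : ℝ) (h : 4 * D - T ^ 2 > 0)
    (W : ℝ → ℝ) (hW : ∀ y, W y = D * y ^ 2 - a * T * y + a ^ 2)
    (P : ℝ → ℝ)
    (hPbot : Tendsto P atTop atBot)
    (hc_pos : 0 < a → c = 0)
    (hc_neg : a < 0 → c = 2 * π / (D * Real.sqrt (4 * D - T ^ 2)))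
    (hchar_ne : a ≠ 0 → ∀ y₀ ≥ M, (∫ y in P y₀..y₀, -y / W y) = c * T)
    (hchar_eq : a = 0 → ∀ y₀ ≥ M,
      P y₀ = -Real.exp (π * T / Real.sqrt (4 * D - T ^ 2)) * y₀) :
    Tendsto (fun y₀ => P y₀ / y₀) atTop
      (nhds (-Real.exp (π * T / Real.sqrt (4 * D - T ^ 2)))) := by
  set K := √(4 * D - T ^ 2)
  have hK : 0 < K := sqrt_pos.mpr h
  have hD : 0 < D := by nlinarith [sq_nonneg T]
  rcases eq_or_ne a 0 with ha | ha
  · refine tendsto_const_nhds.congr' ?_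
    filter_upwards [eventually_ge_atTop M, eventually_gt_atTop 0] with y hy hy0
    rw [hchar_eq ha y hy]
    field_simp
  have hs : (|a| * K) ^ 2 = 4 * D * a ^ 2 - (-(a * T)) ^ 2 := by
    rw [mul_pow, sq_abs, sq_sqrt h.le]; ring
  have hs0 : 0 < |a| * K := mul_pos (abs_pos.mpr ha) hK
  have hκ : ∀ᶠ y in atTop, quadPotential D (-(a * T)) (a ^ 2) (|a| * K) y
      - quadPotential D (-(a * T)) (a ^ 2) (|a| * K) (P y) = c * T := by
    filter_upwards [eventually_ge_atTop M] with y hy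
    rw [← integral_neg_div_quadratic hD hs hs0.ne', ← hchar_ne ha y hy]
    congr 1
    funext x
    rw [hW]
    ring
  convert tendsto_div_of_quadPotential_sub_eq hD hs hs0 hPbot hκ using 4
  rcases ha.lt_or_gt with hneg | hpos
  · rw [hc_neg hneg, abs_of_neg hneg]
    field_simp
    ring
  · rw [hc_pos hpos, abs_of_pos hpos]
    field_simp
    ring

theorem halfmap_slope_at_infinity (a T D M c : ℝ) (h : 4 * D - T ^ 2 > 0)
    (W : ℝ → ℝ) (hW : ∀ y, W y = D * y ^ 2 - a * T * y + a ^ 2)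
    (hWpos : ∀ y : ℝ, 0 < W y)
    (P : ℝ → ℝ)
    (hPneg : ∀ y₀ ≥ M, P y₀ < 0)
    (hPbot : Tendsto P atTop atBot)
    (hc_pos : 0 < a → c = 0)
    (hc_neg : a < 0 → c = 2 * π / (D * Real.sqrt (4 * D - T ^ 2)))
    (hchar_ne : a ≠ 0 → ∀ y₀ ≥ M, (∫ y in P y₀..y₀, -y / W y) = c * T)
    (hchar_eq : a = 0 → ∀ y₀ ≥ M,
      P y₀ = -Real.exp (π * T / Real.sqrt (4 * D - T ^ 2)) * y₀) :
    Tendsto (fun y₀ => P y₀ / y₀) atTop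
      (nhds (-Real.exp (π * T / Real.sqrt (4 * D - T ^ 2)))) :=
  halfmap_slope_at_infinity_general a T D M c h W hW P hPbot hc_pos hc_neg hchar_ne hchar_eq
end
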